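/- arXiv:2009.09623 — 4 statements merged into one kernel-verified Lean document; each statement's English description precedes it below -/
import Mathlib

section
/- For the function h(x) = 2^{-1/x} + 2^{-1/(1-x)} defined on (0,1), it holds that 1/4 ≤ h(x) ≤ 1 for all x ∈ (0,1). -/
/-!
For the upper bound, Bernoulli's inequality gives `1/x < 2^(1/x)`, i.e. `2^(-1/x) < x`, so the two
terms are bounded by `x` and `1 - x`. For the lower bound, one of `x`, `1 - x` is at least `1/2`,
and the corresponding term is at least `2^(-2) = 1/4`.
-/

open Real

lemma lt_two_rpow_of_one_le {t : ℝ} (ht : 1 ≤ t) : t < (2 : ℝ) ^ t := by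
  have bernoulli := one_add_mul_self_le_rpow_one_add (s := 1) (by norm_num) ht
  norm_num at bernoulli
  linarith

lemma two_rpow_neg_one_div_le {x : ℝ} (hx : 0 < x) (hx1 : x ≤ 1) :
    (2 : ℝ) ^ (-1 / x) ≤ x := by
  have ht : 1 ≤ 1 / x := by rw [le_div_iff₀ hx]; linarith
  have hpos : (0 : ℝ) < 2 ^ (1 / x) := by positivity
  rw [neg_div, rpow_neg zero_le_two, inv_le_comm₀ hpos hx, ← one_div]
  exact (lt_two_rpow_of_one_le ht).le

lemma one_fourth_le_two_rpow_neg_one_div {x : ℝ} (hx : 1 / 2 ≤ x) :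
    1 / 4 ≤ (2 : ℝ) ^ (-1 / x) := by
  have hexp : (-2 : ℝ) ≤ -1 / x := by
    rw [neg_div, neg_le_neg_iff, div_le_iff₀ (by linarith)]; linarith
  calc (1 / 4 : ℝ) = 2 ^ (-2 : ℝ) := by norm_num
    _ ≤ 2 ^ (-1 / x) := rpow_le_rpow_of_exponent_le one_le_two hexp

theorem stmt2 :
    ∀ x ∈ Set.Ioo (0 : ℝ) 1,
      1 / 4 ≤ (2 : ℝ) ^ (-1 / x) + (2 : ℝ) ^ (-1 / (1 - x)) ∧
      (2 : ℝ) ^ (-1 / x) + (2 : ℝ) ^ (-1 / (1 - x)) ≤ 1 := by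
  rintro x ⟨hx0, hx1⟩
  have hA : 0 ≤ (2 : ℝ) ^ (-1 / x) := by positivity
  have hB : 0 ≤ (2 : ℝ) ^ (-1 / (1 - x)) := by positivity
  constructor
  · rcases le_total x (1 / 2) with hx | hx
    · linarith [one_fourth_le_two_rpow_neg_one_div (x := 1 - x) (by linarith)]
    · linarith [one_fourth_le_two_rpow_neg_one_div hx]
  · linarith [two_rpow_neg_one_div_le hx0 hx1.le,
      two_rpow_neg_one_div_le (x := 1 - x) (by linarith) (by linarith)]
end

section
/- Let K ⊆ ℝ^d be nonempty, closed and convex, f : ℝ^d → ℝ be L-smooth (i.e., ∇f is L-Lipschitz) and G-Lipschitz on K, and let ε > 0, δ ∈ (0, √(2ε/L)). Suppose x* ∈ K satisfies ‖x* - Π_K(x* - ∇f(x*))‖₂ < α, where α ≤ (√((G+δ)² + 4(ε - Lδ²/2)) - (G+δ))/2. Then f(x*) < f(x) + ε for all x ∈ K with ‖x - x*‖₂ ≤ δ; i.e., x* is an (ε,δ)-local minimum of f on K. -/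
/-!
The descent lemma bounds `f x` below by `f x* + ⟪∇f x*, x - x*⟫ - L/2 ‖x - x*‖²`. Writing `p` for the
projection of `x* - ∇f x*` onto `K`, split `x - x* = (x - p) + (p - x*)`: the variational inequality of
the projection gives `⟪∇f x*, x - p⟫ ≥ ⟪x* - p, x - p⟫ ≥ -‖x* - p‖ ‖x - x*‖`, and `G`-Lipschitzness along
the segment `[x*, p] ⊆ K` gives `⟪∇f x*, p - x*⟫ ≥ -G ‖x* - p‖`. Hence
`f x ≥ f x* - ‖x* - p‖ (G + δ) - L/2 δ²`, and the choice of `α` (a root bound for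
`α² + (G + δ) α = ε - L δ²/2`) makes the loss smaller than `ε`.
-/

open RealInnerProductSpace Set

section Gradient

variable {F : Type*} [NormedAddCommGroup F] [InnerProductSpace ℝ F] [CompleteSpace F]
  {K : Set F} {f : F → ℝ} {L G : ℝ} {u w : F}

theorem hasDerivAt_apply_add_smul {v : F} {t : ℝ} (hf : DifferentiableAt ℝ f (u + t • v)) :
    HasDerivAt (fun s : ℝ => f (u + s • v)) ⟪gradient f (u + t • v), v⟫ t := by
  have hline : HasDerivAt (fun s : ℝ => u + s • v) v t := by
    simpa using ((hasDerivAt_id t).smul_const v).const_add u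
  exact hf.hasGradientAt.hasFDerivAt.comp_hasDerivAt t hline

theorem Convex.quadratic_lower_bound_of_gradient_lipschitz (hK : Convex ℝ K)
    (hf : Differentiable ℝ f)
    (hsmooth : ∀ x ∈ K, ∀ y ∈ K, ‖gradient f x - gradient f y‖ ≤ L * ‖x - y‖)
    (hu : u ∈ K) (hw : w ∈ K) :
    f u + ⟪gradient f u, w - u⟫ - L / 2 * ‖w - u‖ ^ 2 ≤ f w := by
  set v := w - u
  set g := gradient f u
  -- The claim is `ψ 0 ≤ ψ 1`, and `ψ' ≥ 0` on `[0, 1]` by the Lipschitz bound on `∇f`.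
  let ψ : ℝ → ℝ := fun t => f (u + t • v) - t * ⟪g, v⟫ + L / 2 * ‖v‖ ^ 2 * t ^ 2
  let ψ' : ℝ → ℝ := fun t => ⟪gradient f (u + t • v) - g, v⟫ + L * ‖v‖ ^ 2 * t
  have hψ : ∀ t, HasDerivAt ψ (ψ' t) t := by
    intro t
    have h : HasDerivAt ψ _ t := ((hasDerivAt_apply_add_smul (u := u) (v := v) (hf _)).sub
      (hasDerivAt_mul_const ⟪g, v⟫)).add ((hasDerivAt_pow 2 t).const_mul (L / 2 * ‖v‖ ^ 2))
    refine h.congr_deriv ?_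
    simp only [ψ', inner_sub_left]
    ring
  have hψ'_nonneg : ∀ t ∈ Icc (0 : ℝ) 1, 0 ≤ ψ' t := by
    intro t ht
    have hLip : ‖gradient f (u + t • v) - g‖ ≤ L * (t * ‖v‖) := by
      simpa [norm_smul, abs_of_nonneg ht.1] using
        hsmooth _ (hK.add_smul_sub_mem hu hw ht) u hu
    have hCS := neg_le_of_abs_le (abs_real_inner_le_norm (gradient f (u + t • v) - g) v)
    nlinarith [mul_le_mul_of_nonneg_right hLip (norm_nonneg v)]
  have hmono : MonotoneOn ψ (Icc 0 1) :=
    monotoneOn_of_hasDerivWithinAt_nonneg (convex_Icc 0 1)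
      (fun t _ => (hψ t).continuousAt.continuousWithinAt)
      (fun t _ => (hψ t).hasDerivWithinAt)
      (fun t ht => hψ'_nonneg t (interior_subset ht))
  have h01 := hmono (left_mem_Icc.2 zero_le_one) (right_mem_Icc.2 zero_le_one) zero_le_one
  simp only [ψ, v, zero_smul, add_zero, one_smul, add_sub_cancel] at h01
  linarith

theorem Convex.neg_mul_norm_le_inner_gradient_of_lipschitz (hK : Convex ℝ K)
    (hf : Differentiable ℝ f) (hlip : ∀ x ∈ K, ∀ y ∈ K, |f x - f y| ≤ G * ‖x - y‖)
    (hu : u ∈ K) (hw : w ∈ K) :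
    -(G * ‖w - u‖) ≤ ⟪gradient f u, w - u⟫ := by
  set v := w - u
  -- Adding the linear term `G ‖v‖ t` to `f` along the segment makes `t = 0` a minimum on `[0, 1]`.
  let φ : ℝ → ℝ := fun t => f (u + t • v) + t * (G * ‖v‖)
  have hφ : HasDerivAt φ (⟪gradient f u, v⟫ + G * ‖v‖) 0 := by
    have h : HasDerivAt φ _ 0 := (hasDerivAt_apply_add_smul (u := u) (v := v) (t := 0) (hf _)).add
      (hasDerivAt_mul_const (G * ‖v‖))
    simpa using h
  have hmin : IsMinOn φ (Icc 0 1) 0 := by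
    intro t ht
    have hl := hlip _ (hK.add_smul_sub_mem hu hw ht) u hu
    simp only [add_sub_cancel_left, norm_smul, Real.norm_eq_abs, abs_of_nonneg ht.1] at hl
    show φ 0 ≤ φ t
    simp only [φ, zero_smul, add_zero, zero_mul]
    nlinarith [neg_abs_le (f (u + t • v) - f u)]
  have hcone : (1 : ℝ) ∈ posTangentConeAt (Icc 0 1) 0 :=
    mem_posTangentConeAt_of_segment_subset (by simp [segment_eq_Icc])
  have h := hmin.localize.hasFDerivWithinAt_nonneg
    hφ.hasFDerivAt.hasFDerivWithinAt hcone
  rw [ContinuousLinearMap.toSpanSingleton_apply, one_smul] at h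
  linarith

theorem Convex.apply_le_of_projected_gradient_step (hK : Convex ℝ K) (hf : Differentiable ℝ f)
    (hsmooth : ∀ x ∈ K, ∀ y ∈ K, ‖gradient f x - gradient f y‖ ≤ L * ‖x - y‖)
    (hlip : ∀ x ∈ K, ∀ y ∈ K, |f x - f y| ≤ G * ‖x - y‖)
    {xs p x : F} (hxs : xs ∈ K) (hp : p ∈ K) (hx : x ∈ K)
    (hproj : ∀ z ∈ K, ⟪(xs - gradient f xs) - p, z - p⟫ ≤ 0) :
    f xs - ‖xs - p‖ * (G + ‖x - xs‖) - L / 2 * ‖x - xs‖ ^ 2 ≤ f x := by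
  set g := gradient f xs
  have hdescent := hK.quadratic_lower_bound_of_gradient_lipschitz hf hsmooth hxs hx
  have hdir : -(G * ‖xs - p‖) ≤ ⟪g, p - xs⟫ := by
    have h := hK.neg_mul_norm_le_inner_gradient_of_lipschitz hf hlip hxs hp
    rwa [norm_sub_rev] at h
  have hvar : ⟪xs - p, x - p⟫ ≤ ⟪g, x - p⟫ := by
    have h := hproj x hx
    rw [sub_right_comm, inner_sub_left] at h
    linarith
  have hsplit : ⟪g, x - xs⟫ = ⟪g, x - p⟫ + ⟪g, p - xs⟫ := by
    rw [← inner_add_right, sub_add_sub_cancel]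
  have hxp : ⟪xs - p, x - p⟫ = ⟪xs - p, x - xs⟫ + ‖xs - p‖ ^ 2 := by
    rw [← sub_add_sub_cancel x xs p, inner_add_right, real_inner_self_eq_norm_sq]
  have hCS := neg_le_of_abs_le (abs_real_inner_le_norm (xs - p) (x - xs))
  nlinarith [sq_nonneg ‖xs - p‖]

end Gradient

theorem sq_add_mul_le_of_le_quadratic_root {α b c : ℝ} (h0 : 0 ≤ 2 * α + b)
    (hD : 0 ≤ b ^ 2 + 4 * c) (h : α ≤ (Real.sqrt (b ^ 2 + 4 * c) - b) / 2) :
    α ^ 2 + α * b ≤ c := by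
  have hroot : 2 * α + b ≤ Real.sqrt (b ^ 2 + 4 * c) := by linarith
  have hsq := pow_le_pow_left₀ h0 hroot 2
  rw [Real.sq_sqrt hD] at hsq
  nlinarith

theorem stmt6_general {d : ℕ} (K : Set (EuclideanSpace ℝ (Fin d)))
    (hKconv : Convex ℝ K)
    (f : EuclideanSpace ℝ (Fin d) → ℝ) (hdiff : Differentiable ℝ f)
    (L G ε δ α : ℝ) (hL : 0 < L) (hG : 0 < G)
    (hsmooth : ∀ x ∈ K, ∀ y ∈ K, ‖gradient f x - gradient f y‖ ≤ L * ‖x - y‖)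
    (hlip : ∀ x ∈ K, ∀ y ∈ K, |f x - f y| ≤ G * ‖x - y‖)
    (hδ0 : 0 < δ) (hδ : δ < Real.sqrt (2 * ε / L))
    (hα : α ≤ (Real.sqrt ((G + δ) ^ 2 + 4 * (ε - L / 2 * δ ^ 2)) - (G + δ)) / 2)
    (xs : EuclideanSpace ℝ (Fin d)) (hxs : xs ∈ K)
    (p : EuclideanSpace ℝ (Fin d)) (hpK : p ∈ K)
    (hproj : ∀ z ∈ K, ⟪(xs - gradient f xs) - p, z - p⟫ ≤ 0)
    (hfix : ‖xs - p‖ < α) :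
    ∀ x ∈ K, ‖x - xs‖ ≤ δ → f xs < f x + ε := by
  intro x hx hxδ
  have hα0 : 0 < α := (norm_nonneg _).trans_lt hfix
  have hδε : L / 2 * δ ^ 2 < ε := by
    have h := (Real.lt_sqrt hδ0.le).mp hδ
    rw [lt_div_iff₀ hL] at h
    linarith
  have hroot : α ^ 2 + α * (G + δ) ≤ ε - L / 2 * δ ^ 2 :=
    sq_add_mul_le_of_le_quadratic_root (by linarith) (add_nonneg (sq_nonneg _) (by linarith)) hα
  have hlow := hKconv.apply_le_of_projected_gradient_step hdiff hsmooth hlip hxs hpK hx hproj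
  have hdist : ‖xs - p‖ * (G + ‖x - xs‖) + L / 2 * ‖x - xs‖ ^ 2
      ≤ ‖xs - p‖ * (G + δ) + L / 2 * δ ^ 2 := by gcongr
  have hgap : ‖xs - p‖ * (G + δ) < α * (G + δ) := by gcongr
  linarith [sq_nonneg α]

theorem stmt6 {d : ℕ} (K : Set (EuclideanSpace ℝ (Fin d)))
    (hKne : K.Nonempty) (hKcl : IsClosed K) (hKconv : Convex ℝ K)
    (f : EuclideanSpace ℝ (Fin d) → ℝ) (hdiff : Differentiable ℝ f)
    (L G ε δ α : ℝ) (hL : 0 < L) (hG : 0 < G)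
    (hsmooth : ∀ x ∈ K, ∀ y ∈ K, ‖gradient f x - gradient f y‖ ≤ L * ‖x - y‖)
    (hlip : ∀ x ∈ K, ∀ y ∈ K, |f x - f y| ≤ G * ‖x - y‖)
    (hε : 0 < ε) (hδ0 : 0 < δ) (hδ : δ < Real.sqrt (2 * ε / L))
    (hα : α ≤ (Real.sqrt ((G + δ) ^ 2 + 4 * (ε - L / 2 * δ ^ 2)) - (G + δ)) / 2)
    (xs : EuclideanSpace ℝ (Fin d)) (hxs : xs ∈ K)
    (p : EuclideanSpace ℝ (Fin d)) (hpK : p ∈ K)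
    (hproj : ∀ z ∈ K, ⟪(xs - gradient f xs) - p, z - p⟫ ≤ 0)
    (hfix : ‖xs - p‖ < α) :
    ∀ x ∈ K, ‖x - xs‖ ≤ δ → f xs < f x + ε :=
  stmt6_general K hKconv f hdiff L G ε δ α hL hG hsmooth hlip hδ0 hδ hα xs hxs p hpK hproj hfix
end

section
/- Let K ⊆ ℝ^d be nonempty, closed and convex, f : ℝ^d → ℝ be L-smooth on K, and α > 0. Set ε = α²L/(5L+2)² and δ = √(ε/L). If x* ∈ K satisfies f(x*) < f(x) + ε for all x ∈ K with ‖x - x*‖₂ ≤ δ (an (ε,δ)-local minimum), then ‖x* - Π_K(x* - ∇f(x*))‖₂ < α/2. -/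
/-!
Suppose `r = ‖x* - p‖ ≥ α/2`, where `p = Π_K(x* - ∇f(x*))`, and put `δ = α/(5L+2)`, so that
`ε = Lδ²`. Testing the projection inequality at `x*` gives `⟪∇f(x*), x* - p⟫ ≥ r²`. The point `y`
at distance `δ ≤ r` from `x*` on the segment towards `p` lies in `K`, and the descent lemma gives
`f(y) ≤ f(x*) - δr + Lδ²/2`. Local minimality, `f(x*) < f(y) + Lδ²`, then forces
`r < 3Lδ/2 < α/2`.
-/

open RealInnerProductSpace

section

variable {E : Type*} [NormedAddCommGroup E] [InnerProductSpace ℝ E]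

theorem norm_sub_sq_le_inner_of_inner_sub_sub_nonpos {x g p : E}
    (h : ⟪x - g - p, x - p⟫ ≤ 0) : ‖x - p‖ ^ 2 ≤ ⟪g, x - p⟫ := by
  rw [sub_right_comm, inner_sub_left, real_inner_self_eq_norm_sq] at h
  linarith

variable [CompleteSpace E] {f : E → ℝ} {K : Set E} {L : ℝ}

theorem hasDerivAt_comp_add_smul {a v : E} {s : ℝ} (hf : DifferentiableAt ℝ f (a + s • v)) :
    HasDerivAt (fun t : ℝ => f (a + t • v)) ⟪gradient f (a + s • v), v⟫ s := by
  have hline : HasDerivAt (fun t : ℝ => a + t • v) v s := by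
    simpa using ((hasDerivAt_id s).smul_const v).const_add a
  simpa [InnerProductSpace.toDual_apply_apply, Function.comp_def] using
    hf.hasGradientAt.hasFDerivAt.comp_hasDerivAt s hline

theorem inner_gradient_sub_le
    (hsmooth : ∀ x ∈ K, ∀ y ∈ K, ‖gradient f x - gradient f y‖ ≤ L * ‖x - y‖)
    {x y : E} (hx : x ∈ K) (hy : y ∈ K) (v : E) :
    ⟪gradient f y - gradient f x, v⟫ ≤ L * ‖y - x‖ * ‖v‖ :=
  (real_inner_le_norm _ _).trans
    (mul_le_mul_of_nonneg_right (hsmooth y hy x hx) (norm_nonneg v))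

theorem descent_lemma_of_convex (hK : Convex ℝ K) (hf : Differentiable ℝ f)
    (hsmooth : ∀ x ∈ K, ∀ y ∈ K, ‖gradient f x - gradient f y‖ ≤ L * ‖x - y‖)
    {x y : E} (hx : x ∈ K) (hy : y ∈ K) :
    f y ≤ f x + ⟪gradient f x, y - x⟫ + L / 2 * ‖y - x‖ ^ 2 := by
  set v := y - x
  set g : ℝ → ℝ := fun s => f (x + s • v) - s * ⟪gradient f x, v⟫ - L / 2 * s ^ 2 * ‖v‖ ^ 2
  have hg : ∀ s, HasDerivAt g
      (⟪gradient f (x + s • v), v⟫ - ⟪gradient f x, v⟫ - L * s * ‖v‖ ^ 2) s := by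
    intro s
    have hquad := (((hasDerivAt_pow 2 s).const_mul (L / 2)).mul_const (‖v‖ ^ 2))
    refine (((hasDerivAt_comp_add_smul (hf _)).sub
      ((hasDerivAt_id s).mul_const ⟪gradient f x, v⟫)).sub hquad).congr_deriv ?_
    simp only [one_mul, Nat.cast_ofNat]
    ring
  have hanti : AntitoneOn g (Set.Icc 0 1) := by
    refine antitoneOn_of_deriv_nonpos (convex_Icc 0 1)
      (fun s _ => (hg s).continuousAt.continuousWithinAt)
      (fun s _ => (hg s).differentiableAt.differentiableWithinAt) fun s hs => ?_
    rw [interior_Icc] at hs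
    have hxs : x + s • v ∈ K := hK.add_smul_sub_mem hx hy ⟨hs.1.le, hs.2.le⟩
    have hbound := inner_gradient_sub_le hsmooth hx hxs v
    rw [inner_sub_left, add_sub_cancel_left, norm_smul, Real.norm_of_nonneg hs.1.le] at hbound
    rw [(hg s).deriv]
    linarith
  have := hanti (Set.left_mem_Icc.2 zero_le_one) (Set.right_mem_Icc.2 zero_le_one) zero_le_one
  simp only [g, zero_smul, add_zero, one_smul, zero_mul, sub_zero, one_pow, mul_one,
    add_sub_cancel, v] at this
  linarith

theorem descent_along_projected_gradient (hK : Convex ℝ K) (hf : Differentiable ℝ f)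
    (hsmooth : ∀ x ∈ K, ∀ y ∈ K, ‖gradient f x - gradient f y‖ ≤ L * ‖x - y‖)
    {x p : E} (hx : x ∈ K) (hp : p ∈ K) (hproj : ⟪x - gradient f x - p, x - p⟫ ≤ 0)
    {t : ℝ} (ht : t ∈ Set.Icc (0 : ℝ) 1) :
    f (x + t • (p - x)) ≤ f x - t * ‖x - p‖ ^ 2 + L / 2 * (t * ‖x - p‖) ^ 2 := by
  have hdesc := descent_lemma_of_convex hK hf hsmooth hx (hK.add_smul_sub_mem hx hp ht)
  have hinner := mul_le_mul_of_nonneg_left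
    (norm_sub_sq_le_inner_of_inner_sub_sub_nonpos hproj) ht.1
  rw [add_sub_cancel_left, ← neg_sub x p, smul_neg, inner_neg_right, real_inner_smul_right,
    norm_neg, norm_smul, Real.norm_of_nonneg ht.1] at hdesc
  rw [← neg_sub x p, smul_neg]
  linarith

end

theorem stmt7_general {d : ℕ} (K : Set (EuclideanSpace ℝ (Fin d)))
    (hKconv : Convex ℝ K)
    (f : EuclideanSpace ℝ (Fin d) → ℝ) (hdiff : Differentiable ℝ f)
    (L α : ℝ) (hL : 0 < L) (hα : 0 < α)
    (hsmooth : ∀ x ∈ K, ∀ y ∈ K, ‖gradient f x - gradient f y‖ ≤ L * ‖x - y‖)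
    (xs : EuclideanSpace ℝ (Fin d)) (hxs : xs ∈ K)
    (hlocal : ∀ x ∈ K, ‖x - xs‖ ≤ Real.sqrt ((α ^ 2 * L / (5 * L + 2) ^ 2) / L) →
      f xs < f x + α ^ 2 * L / (5 * L + 2) ^ 2)
    (p : EuclideanSpace ℝ (Fin d)) (hpK : p ∈ K)
    (hproj : ∀ z ∈ K, ⟪(xs - gradient f xs) - p, z - p⟫ ≤ 0) :
    ‖xs - p‖ < α / 2 := by
  by_contra! hr
  have hε : α ^ 2 * L / (5 * L + 2) ^ 2 = L * (α / (5 * L + 2)) ^ 2 := by rw [div_pow]; ring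
  set r := ‖xs - p‖
  set δ := α / (5 * L + 2)
  have hδ : 0 < δ := by positivity
  have hδr : δ ≤ r := (div_le_div_of_nonneg_left hα.le two_pos (by linarith)).trans hr
  have hr0 : 0 < r := hδ.trans_le hδr
  have hsqrt : Real.sqrt (L * δ ^ 2 / L) = δ := by
    rw [mul_div_cancel_left₀ _ hL.ne', Real.sqrt_sq hδ.le]
  have ht : δ / r ∈ Set.Icc (0 : ℝ) 1 := ⟨by positivity, (div_le_one hr0).2 hδr⟩
  have hdec := descent_along_projected_gradient hKconv hdiff hsmooth hxs hpK
    (hproj xs hxs) ht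
  set y := xs + (δ / r) • (p - xs)
  have hyδ : ‖y - xs‖ = δ := by
    rw [add_sub_cancel_left, norm_smul, norm_sub_rev, Real.norm_of_nonneg ht.1,
      div_mul_cancel₀ _ hr0.ne']
  have hloc := hlocal y (hKconv.add_smul_sub_mem hxs hpK ht) (by rw [hε, hsqrt, hyδ])
  rw [hε] at hloc
  rw [div_mul_cancel₀ _ hr0.ne', pow_two r, ← mul_assoc, div_mul_cancel₀ _ hr0.ne'] at hdec
  have hr_lt : r < 3 * L * δ / 2 :=
    lt_of_mul_lt_mul_left (by linarith : δ * r < δ * (3 * L * δ / 2)) hδ.le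
  have : 3 * L * δ / 2 < α / 2 := by
    rw [div_lt_div_iff_of_pos_right two_pos, mul_div_assoc', div_lt_iff₀ (by positivity)]
    nlinarith
  linarith

theorem stmt7 {d : ℕ} (K : Set (EuclideanSpace ℝ (Fin d)))
    (hKne : K.Nonempty) (hKcl : IsClosed K) (hKconv : Convex ℝ K)
    (f : EuclideanSpace ℝ (Fin d) → ℝ) (hdiff : Differentiable ℝ f)
    (L α : ℝ) (hL : 0 < L) (hα : 0 < α)
    (hsmooth : ∀ x ∈ K, ∀ y ∈ K, ‖gradient f x - gradient f y‖ ≤ L * ‖x - y‖)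
    (xs : EuclideanSpace ℝ (Fin d)) (hxs : xs ∈ K)
    (hlocal : ∀ x ∈ K, ‖x - xs‖ ≤ Real.sqrt ((α ^ 2 * L / (5 * L + 2) ^ 2) / L) →
      f xs < f x + α ^ 2 * L / (5 * L + 2) ^ 2)
    (p : EuclideanSpace ℝ (Fin d)) (hpK : p ∈ K)
    (hproj : ∀ z ∈ K, ⟪(xs - gradient f xs) - p, z - p⟫ ≤ 0) :
    ‖xs - p‖ < α / 2 :=
  stmt7_general K hKconv f hdiff L α hL hα hsmooth xs hxs hlocal p hpK hproj
end

section
/- Let f(x,y) = Σ_{j=1}^m P_j(x)·(w_j - z_j)² where each P_j(x) ∈ [0,1]. Fix a clause j and points (x*, w*, z*) ∈ [0,1]^{n+2m}. If |w*_j - z*_j| ≥ 1/4, then decreasing w_j to z*_j decreases f by at least P_j(x*)/16; if |w*_j - z*_j| ≤ 1/4, then moving z*_j to 0 or 1 (whichever is farther from w*_j) increases f by at least P_j(x*)/16. Consequently, if (x*, w*, z*) is an (ε, 1)-local min-max equilibrium (min over (x,w), max over z) of f on [0,1]^{n+2m}, then P_j(x*) ≤ 16ε for every j. -/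
/-!
Only the `j`-th summand of `f` depends on `w j` and `z j`, and changing one coordinate of a point
of the unit cube to another value in `[0, 1]` moves it by at most `1`. If `w j` is far from `z j`,
the minimizer gains `P j x / 16` by setting `w j := z j`; if it is close, the maximizer gains
`P j x / 16` by moving `z j` to the endpoint of `[0, 1]` farther from `w j`. At an `(ε, 1)`-local
min-max equilibrium neither player gains `ε`, so `P j x ≤ 16 ε`.
-/
open Finset Function

theorem forall_update_mem {α ι : Type*} [DecidableEq ι] {s : Set α} {w : ι → α}
    (hw : ∀ k, w k ∈ s) (j : ι) {a : α} (ha : a ∈ s) : ∀ k, update w j a k ∈ s :=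
  (forall_update_iff w fun _ t ↦ t ∈ s).2 ⟨ha, fun k _ ↦ hw k⟩

section

variable {ι : Type*} [Fintype ι] [DecidableEq ι]

theorem sum_apply_update_sub_sum (g : ι → ℝ → ℝ) (w : ι → ℝ) (j : ι) (a : ℝ) :
    ∑ k, g k (update w j a k) - ∑ k, g k (w k) = g j a - g j (w j) := by
  rw [← sum_sub_distrib, sum_eq_single j (fun k _ hk ↦ by simp [hk]) (by simp), update_self]

theorem sqrt_sum_sq_update_sub_le_one {w : ι → ℝ} {j : ι} {a : ℝ} (hw : w j ∈ Set.Icc 0 1)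
    (ha : a ∈ Set.Icc 0 1) : √(∑ k, (update w j a k - w k) ^ 2) ≤ 1 := by
  have hsum : ∑ k, (update w j a k - w k) ^ 2 = (a - w j) ^ 2 := by
    have hdiff := sum_apply_update_sub_sum (fun k t ↦ (t - w k) ^ 2) w j a
    simpa using hdiff
  rw [hsum, Real.sqrt_sq_eq_abs]
  exact abs_sub_le_of_nonneg_of_le ha.1 ha.2 hw.1 hw.2

theorem weighted_sum_sq_update_left_le {p w z : ι → ℝ} {j : ι} (hp : 0 ≤ p j)
    (hfar : 1 / 4 ≤ |w j - z j|) :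
    ∑ k, p k * (update w j (z j) k - z k) ^ 2 ≤ ∑ k, p k * (w k - z k) ^ 2 - p j / 16 := by
  have hdiff := sum_apply_update_sub_sum (fun k t ↦ p k * (t - z k) ^ 2) w j (z j)
  have hsq : 1 / 16 ≤ (w j - z j) ^ 2 := by
    rw [← sq_abs]; nlinarith
  simp only [sub_self] at hdiff
  nlinarith

theorem exists_endpoint_sq_sub_le (a b : ℝ) (hnear : |a - b| ≤ 1 / 4) :
    ∃ c : ℝ, (c = 0 ∨ c = 1) ∧ (a - b) ^ 2 + 1 / 16 ≤ (a - c) ^ 2 := by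
  have hsq : (a - b) ^ 2 ≤ 1 / 16 := by
    rw [← sq_abs]; nlinarith [abs_nonneg (a - b)]
  rcases le_total a (1 / 2) with ha | ha
  · exact ⟨1, Or.inr rfl, by nlinarith⟩
  · exact ⟨0, Or.inl rfl, by nlinarith⟩

theorem exists_endpoint_weighted_sum_sq_update_right {p w z : ι → ℝ} {j : ι} (hp : 0 ≤ p j)
    (hnear : |w j - z j| ≤ 1 / 4) : ∃ b : ℝ, (b = 0 ∨ b = 1) ∧
      ∑ k, p k * (w k - z k) ^ 2 + p j / 16 ≤ ∑ k, p k * (w k - update z j b k) ^ 2 := by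
  obtain ⟨b, hb, hgain⟩ := exists_endpoint_sq_sub_le (w j) (z j) hnear
  refine ⟨b, hb, ?_⟩
  have hdiff := sum_apply_update_sub_sum (fun k t ↦ p k * (w k - t) ^ 2) z j b
  nlinarith

end

theorem stmt18 (n m : ℕ) (P : Fin m → (Fin n → ℝ) → ℝ)
    (hP : ∀ (j : Fin m) (x : Fin n → ℝ), (∀ i, x i ∈ Set.Icc (0 : ℝ) 1) →
      P j x ∈ Set.Icc (0 : ℝ) 1)
    (f : (Fin n → ℝ) → (Fin m → ℝ) → (Fin m → ℝ) → ℝ)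
    (hf : ∀ x w z, f x w z = ∑ j, P j x * (w j - z j) ^ 2)
    (xs : Fin n → ℝ) (ws zs : Fin m → ℝ) (ε : ℝ)
    (hxs : ∀ i, xs i ∈ Set.Icc (0 : ℝ) 1) (hws : ∀ j, ws j ∈ Set.Icc (0 : ℝ) 1)
    (hzs : ∀ j, zs j ∈ Set.Icc (0 : ℝ) 1) :
    (∀ j : Fin m, 1 / 4 ≤ |ws j - zs j| →
      f xs (Function.update ws j (zs j)) zs ≤ f xs ws zs - P j xs / 16) ∧
    (∀ j : Fin m, |ws j - zs j| ≤ 1 / 4 →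
      ∃ b : ℝ, (b = 0 ∨ b = 1) ∧
        f xs ws zs + P j xs / 16 ≤ f xs ws (Function.update zs j b)) ∧
    ((∀ (x : Fin n → ℝ) (w : Fin m → ℝ), (∀ i, x i ∈ Set.Icc (0 : ℝ) 1) →
        (∀ j, w j ∈ Set.Icc (0 : ℝ) 1) →
        Real.sqrt (∑ i, (x i - xs i) ^ 2 + ∑ j, (w j - ws j) ^ 2) ≤ 1 →
        f xs ws zs < f x w zs + ε) →
      (∀ z : Fin m → ℝ, (∀ j, z j ∈ Set.Icc (0 : ℝ) 1) →
        Real.sqrt (∑ j, (z j - zs j) ^ 2) ≤ 1 →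
        f xs ws z - ε < f xs ws zs) →
      ∀ j : Fin m, P j xs ≤ 16 * ε) := by
  simp only [hf]
  have hPnonneg j : 0 ≤ P j xs := (hP j xs hxs).1
  have hfar j := weighted_sum_sq_update_left_le (p := (P · xs)) (w := ws) (z := zs) (hPnonneg j)
  have hnear j :=
    exists_endpoint_weighted_sum_sq_update_right (p := (P · xs)) (w := ws) (z := zs) (hPnonneg j)
  refine ⟨hfar, hnear, fun hmin hmax j ↦ ?_⟩
  rcases le_total (1 / 4) |ws j - zs j| with hj | hj
  · have := hmin xs _ hxs (forall_update_mem hws j (hzs j))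
      (by simpa using sqrt_sum_sq_update_sub_le_one (hws j) (hzs j))
    linarith [hfar j hj]
  · obtain ⟨b, hb, hgain⟩ := hnear j hj
    have hb01 : b ∈ Set.Icc (0 : ℝ) 1 := by rcases hb with rfl | rfl <;> simp
    linarith [hmax _ (forall_update_mem hzs j hb01) (sqrt_sum_sq_update_sub_le_one (hzs j) hb01)]
end
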